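/- The automorphisms S², σ and σ' mutually commute: σ ∘ σ' = σ' ∘ σ, σ ∘ S² = S² ∘ σ, and σ' ∘ S² = S² ∘ σ'. -/

import Mathlib

/-!
Write `ψ = φ ∘ S`. Strong invariance of `φ` and `ψ` shows that `(id ⊗ ψ) Δ = ψ(·) d` for a
group-like `d` with `φ = ψ(· d)`, and that `(φ S² ⊗ id) Δ = φ(·) d'`; applying `ε` to the latter
gives `φ ∘ S² = τ φ`. From `φ = ψ(· d)` one gets `d σ'(x) = σ(x) d` and `σ'(d) = τ d`, so `σ'` is
`σ` conjugated by the unit `d`, which `σ` only rescales: hence `σ σ' = σ' σ`. From `φ ∘ S² = τ φ`,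
`S² σ S⁻²` is again a modular automorphism of `φ`, so `σ S² = S² σ`; finally `σ' = S⁻¹ σ⁻¹ S`
commutes with `S²` as well.
-/

open TensorProduct HopfAlgebra Coalgebra

section Slice

variable {R A : Type*} [CommSemiring R]

section Module

variable [AddCommMonoid A] [Module R A]

noncomputable def sliceRight (φ : A →ₗ[R] R) : A ⊗[R] A →ₗ[R] A :=
  (TensorProduct.rid R A).toLinearMap ∘ₗ φ.lTensor A

noncomputable def sliceLeft (φ : A →ₗ[R] R) : A ⊗[R] A →ₗ[R] A :=
  (TensorProduct.lid R A).toLinearMap ∘ₗ φ.rTensor A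

@[simp] lemma sliceRight_tmul (φ : A →ₗ[R] R) (x y : A) :
    sliceRight φ (x ⊗ₜ y) = φ y • x := rfl

@[simp] lemma sliceLeft_tmul (φ : A →ₗ[R] R) (x y : A) :
    sliceLeft φ (x ⊗ₜ y) = φ x • y := rfl

lemma apply_sliceRight_eq_apply_sliceLeft (ω φ : A →ₗ[R] R) (t : A ⊗[R] A) :
    ω (sliceRight φ t) = φ (sliceLeft ω t) := by
  induction t using TensorProduct.induction_on with
  | zero => simp
  | tmul u v => simp [mul_comm]
  | add t₁ t₂ h₁ h₂ => simp only [map_add, h₁, h₂]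

end Module

variable [Semiring A] [Algebra R A]

lemma mul_sliceRight (φ : A →ₗ[R] R) (x : A) (t : A ⊗[R] A) :
    x * sliceRight φ t = sliceRight φ ((x ⊗ₜ 1) * t) := by
  induction t using TensorProduct.induction_on with
  | zero => simp
  | tmul u v => simp [Algebra.TensorProduct.tmul_mul_tmul]
  | add t₁ t₂ h₁ h₂ => simp only [map_add, mul_add, h₁, h₂]

lemma sliceLeft_mul (φ : A →ₗ[R] R) (t : A ⊗[R] A) (y : A) :
    sliceLeft φ t * y = sliceLeft φ (t * (1 ⊗ₜ y)) := by
  induction t using TensorProduct.induction_on with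
  | zero => simp
  | tmul u v => simp [Algebra.TensorProduct.tmul_mul_tmul]
  | add t₁ t₂ h₁ h₂ => simp only [map_add, add_mul, h₁, h₂]

lemma mul_sliceLeft (φ : A →ₗ[R] R) (x : A) (t : A ⊗[R] A) :
    x * sliceLeft φ t = sliceLeft φ ((1 ⊗ₜ x) * t) := by
  induction t using TensorProduct.induction_on with
  | zero => simp
  | tmul u v => simp [Algebra.TensorProduct.tmul_mul_tmul]
  | add t₁ t₂ h₁ h₂ => simp only [map_add, mul_add, h₁, h₂]

lemma sliceRight_mul (φ : A →ₗ[R] R) (t : A ⊗[R] A) (y : A) :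
    sliceRight φ t * y = sliceRight φ (t * (y ⊗ₜ 1)) := by
  induction t using TensorProduct.induction_on with
  | zero => simp
  | tmul u v => simp [Algebra.TensorProduct.tmul_mul_tmul]
  | add t₁ t₂ h₁ h₂ => simp only [map_add, add_mul, h₁, h₂]

end Slice

section Coalgebra

variable {R A : Type*} [CommSemiring R] [AddCommMonoid A] [Module R A] [Coalgebra R A]

lemma counit_sliceRight_comul (ω : A →ₗ[R] R) (z : A) :
    counit (sliceRight ω (comul z)) = ω z := by
  have h : counit ∘ₗ sliceRight ω = ω ∘ₗ sliceLeft (counit (R := R)) := by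
    ext x y; simp [mul_comm]
  simpa [sliceLeft] using congr($h (comul z))

lemma counit_sliceLeft_comul (ω : A →ₗ[R] R) (z : A) :
    counit (sliceLeft ω (comul z)) = ω z := by
  have h : counit ∘ₗ sliceLeft ω = ω ∘ₗ sliceRight (counit (R := R)) := by
    ext x y; simp [mul_comm]
  simpa [sliceRight] using congr($h (comul z))

lemma comul_sliceRight_comul (ω : A →ₗ[R] R) (z : A) :
    comul (sliceRight ω (comul z)) = (sliceRight ω ∘ₗ comul).lTensor A (comul z) := by
  have h : comul ∘ₗ sliceRight ω =
      (sliceRight ω).lTensor A ∘ₗ (TensorProduct.assoc R A A A).toLinearMap ∘ₗ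
        comul.rTensor A := by
    ext x y
    suffices ∀ t : A ⊗[R] A,
        ω y • t = (sliceRight ω).lTensor A (TensorProduct.assoc R A A A (t ⊗ₜ y)) by
      simpa using this (comul x)
    intro t
    induction t using TensorProduct.induction_on with
    | zero => simp
    | tmul u v => simp [TensorProduct.tmul_smul]
    | add t₁ t₂ h₁ h₂ => simp only [smul_add, TensorProduct.add_tmul, map_add, h₁, h₂]
  rw [LinearMap.lTensor_comp_apply, ← coassoc_apply]
  exact congr($h (comul z))

end Coalgebra

section Integral

variable {R A : Type*} [CommSemiring R] [Semiring A]

def IsLeftIntegral [Bialgebra R A] (φ : A →ₗ[R] R) : Prop :=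
  ∀ a : A, sliceRight φ (comul a) = φ a • 1

def IsRightIntegral [Bialgebra R A] (ψ : A →ₗ[R] R) : Prop :=
  ∀ a : A, sliceLeft ψ (comul a) = ψ a • 1

variable [HopfAlgebra R A]

lemma sum_antipode_tmul_one_mul_comul {a : A} {ι : Type*} (r : Repr R a ι) :
    ∑ i ∈ r.index, (antipode R (r.left i) ⊗ₜ[R] (1 : A)) * comul (r.right i) = 1 ⊗ₜ a := by
  set μ : A ⊗[R] A →ₗ[R] A := LinearMap.mul' R A ∘ₗ (antipode R).rTensor A
  have h : ∀ (x : A) (t : A ⊗[R] A),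
      (antipode R x ⊗ₜ[R] (1 : A)) * t =
        μ.rTensor A ((TensorProduct.assoc R A A A).symm (x ⊗ₜ t)) := by
    intro x t
    induction t using TensorProduct.induction_on with
    | zero => simp
    | tmul u v => simp [μ, Algebra.TensorProduct.tmul_mul_tmul]
    | add t₁ t₂ h₁ h₂ => simp only [mul_add, TensorProduct.tmul_add, map_add, h₁, h₂]
  simp_rw [h, ← map_sum]
  have hr : ∑ i ∈ r.index, r.left i ⊗ₜ[R] comul (r.right i) = comul.lTensor A (comul a) := by
    simp [← r.eq, map_sum]
  rw [hr, coassoc_symm_apply, ← LinearMap.rTensor_comp_apply, LinearMap.comp_assoc,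
    mul_antipode_rTensor_comul, LinearMap.rTensor_comp_apply, rTensor_counit_comul]
  simp

lemma sum_comul_mul_one_tmul_antipode {a : A} {ι : Type*} (r : Repr R a ι) :
    ∑ i ∈ r.index, comul (r.left i) * ((1 : A) ⊗ₜ[R] antipode R (r.right i)) = a ⊗ₜ 1 := by
  set μ : A ⊗[R] A →ₗ[R] A := LinearMap.mul' R A ∘ₗ (antipode R).lTensor A
  have h : ∀ (t : A ⊗[R] A) (y : A),
      t * ((1 : A) ⊗ₜ[R] antipode R y) = μ.lTensor A (TensorProduct.assoc R A A A (t ⊗ₜ y)) := by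
    intro t y
    induction t using TensorProduct.induction_on with
    | zero => simp
    | tmul u v => simp [μ, Algebra.TensorProduct.tmul_mul_tmul]
    | add t₁ t₂ h₁ h₂ => simp only [add_mul, TensorProduct.add_tmul, map_add, h₁, h₂]
  simp_rw [h, ← map_sum]
  have hr : ∑ i ∈ r.index, comul (r.left i) ⊗ₜ[R] r.right i = comul.rTensor A (comul a) := by
    simp [← r.eq, map_sum]
  rw [hr, coassoc_apply, ← LinearMap.lTensor_comp_apply, LinearMap.comp_assoc,
    mul_antipode_lTensor_comul, LinearMap.lTensor_comp_apply, lTensor_counit_comul]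
  simp

lemma IsLeftIntegral.antipode_sliceRight_comul_mul {φ : A →ₗ[R] R} (hφ : IsLeftIntegral φ)
    (a b : A) :
    antipode R (sliceRight φ (comul a * (1 ⊗ₜ b))) = sliceRight φ ((1 ⊗ₜ a) * comul b) := by
  let r := ℛ R a
  calc antipode R (sliceRight φ (comul a * (1 ⊗ₜ b)))
      = ∑ i ∈ r.index, antipode R (r.left i) * (φ (r.right i * b) • 1) := by
        simp [← r.eq, Finset.sum_mul, map_sum, Algebra.TensorProduct.tmul_mul_tmul]
    _ = ∑ i ∈ r.index, antipode R (r.left i) * sliceRight φ (comul (r.right i * b)) :=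
        Finset.sum_congr rfl fun i _ => by rw [hφ]
    _ = ∑ i ∈ r.index,
          sliceRight φ ((antipode R (r.left i) ⊗ₜ 1) * comul (r.right i) * comul b) := by
        simp_rw [mul_sliceRight, Bialgebra.comul_mul, mul_assoc]
    _ = sliceRight φ ((1 ⊗ₜ a) * comul b) := by
        rw [← map_sum, ← Finset.sum_mul, sum_antipode_tmul_one_mul_comul]

lemma IsRightIntegral.sliceLeft_comul_mul {ψ : A →ₗ[R] R} (hψ : IsRightIntegral ψ) (a b : A) :
    sliceLeft ψ (comul b * (a ⊗ₜ 1)) = antipode R (sliceLeft ψ ((b ⊗ₜ 1) * comul a)) := by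
  let r := ℛ R a
  symm
  calc antipode R (sliceLeft ψ ((b ⊗ₜ 1) * comul a))
      = ∑ i ∈ r.index, (ψ (b * r.left i) • 1) * antipode R (r.right i) := by
        simp [← r.eq, Finset.mul_sum, map_sum, Algebra.TensorProduct.tmul_mul_tmul]
    _ = ∑ i ∈ r.index, sliceLeft ψ (comul (b * r.left i)) * antipode R (r.right i) :=
        Finset.sum_congr rfl fun i _ => by rw [hψ]
    _ = ∑ i ∈ r.index,
          sliceLeft ψ (comul b * (comul (r.left i) * (1 ⊗ₜ antipode R (r.right i)))) := by
        simp_rw [sliceLeft_mul, Bialgebra.comul_mul, mul_assoc]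
    _ = sliceLeft ψ (comul b * (a ⊗ₜ 1)) := by
        rw [← map_sum, ← Finset.mul_sum, sum_comul_mul_one_tmul_antipode]

lemma IsRightIntegral.apply_antipode_sliceRight_comul_mul {φ ψ : A →ₗ[R] R}
    (hψ : IsRightIntegral ψ) (hφ : IsLeftIntegral φ) (z b : A) :
    ψ (antipode R (sliceRight φ (comul z * (1 ⊗ₜ b)))) = φ z * ψ b := by
  rw [hφ.antipode_sliceRight_comul_mul, apply_sliceRight_eq_apply_sliceLeft, ← mul_sliceLeft, hψ,
    mul_smul_comm, mul_one, map_smul, smul_eq_mul, mul_comm]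

lemma IsLeftIntegral.apply_antipode_sliceLeft_tmul_one_mul {φ ψ : A →ₗ[R] R}
    (hφ : IsLeftIntegral φ) (hψ : IsRightIntegral ψ) (z b : A) :
    φ (antipode R (sliceLeft ψ ((b ⊗ₜ 1) * comul z))) = φ b * ψ z := by
  rw [← hψ.sliceLeft_comul_mul, ← apply_sliceRight_eq_apply_sliceLeft, ← sliceRight_mul, hφ,
    smul_mul_assoc, one_mul, map_smul, smul_eq_mul]

end Integral

section Modular

variable {K A : Type*} [Field K] [Ring A] [HopfAlgebra K A]

lemma eq_zero_of_forall_apply_antipode_mul_eq_zero (hS : Function.Bijective (antipode K (A := A)))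
    {φ : A →ₗ[K] K} (hfaith : ∀ a : A, (∀ b : A, φ (a * b) = 0) → a = 0) {x : A}
    (hx : ∀ b : A, φ (antipode K (b * x)) = 0) : x = 0 := by
  have hSx : antipode K x = 0 := hfaith _ fun c => by
    obtain ⟨b, rfl⟩ := hS.2 c
    rw [← antipode_mul_antidistrib]
    exact hx b
  exact hS.1 (by rw [hSx, map_zero])

theorem exists_isGroupLikeElem_forall_apply_antipode_mul_eq
    (hS : Function.Bijective (antipode K (A := A))) {φ : A →ₗ[K] K} (hφ0 : φ ≠ 0)
    (hφL : IsLeftIntegral φ) (hfaith : ∀ a : A, (∀ b : A, φ (a * b) = 0) → a = 0)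
    (hψR : IsRightIntegral (φ ∘ₗ antipode K)) :
    ∃ d : A, IsGroupLikeElem K d ∧ ∀ b : A, φ (antipode K (b * d)) = φ b := by
  set ψ := φ ∘ₗ antipode K
  have hpair : ∀ z b : A, ψ (b * sliceRight ψ (comul z)) = ψ z * φ b := fun z b => by
    rw [mul_sliceRight, apply_sliceRight_eq_apply_sliceLeft, mul_comm]
    exact hφL.apply_antipode_sliceLeft_tmul_one_mul hψR z b
  obtain ⟨a₀, ha₀⟩ : ∃ a₀, ψ a₀ = 1 := ((LinearMap.surjective_iff_ne_zero.mpr hφ0).comp hS.2) 1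
  set d := sliceRight ψ (comul a₀)
  have hd : ∀ b, ψ (b * d) = φ b := fun b => by
    rw [hpair, ha₀, one_mul]
  have hslice : sliceRight ψ ∘ₗ comul = ψ.smulRight d := by
    ext z
    rw [LinearMap.comp_apply, LinearMap.smulRight_apply]
    refine sub_eq_zero.mp (eq_zero_of_forall_apply_antipode_mul_eq_zero hS hfaith fun b => ?_)
    change ψ _ = 0
    rw [mul_sub, map_sub, mul_smul_comm, map_smul, hpair, hd, smul_eq_mul, sub_self]
  have htensor : (ψ.smulRight d).lTensor A = (TensorProduct.mk K A A).flip d ∘ₗ sliceRight ψ := by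
    ext x y
    simp [TensorProduct.tmul_smul, TensorProduct.smul_tmul']
  refine ⟨d, ⟨?_, ?_⟩, hd⟩
  · simpa [d, counit_sliceRight_comul] using ha₀
  · rw [comul_sliceRight_comul, hslice, htensor]
    rfl

theorem exists_forall_apply_antipode_antipode_eq_mul {φ : A →ₗ[K] K} (hφ0 : φ ≠ 0)
    (hφL : IsLeftIntegral φ) (hfaith : ∀ a : A, (∀ b : A, φ (a * b) = 0) → a = 0)
    (hψR : IsRightIntegral (φ ∘ₗ antipode K)) :
    ∃ τ : K, ∀ z : A, φ (antipode K (antipode K z)) = τ * φ z := by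
  set ω := φ ∘ₗ antipode K ∘ₗ antipode K
  have hpair : ∀ z b : A, φ (sliceLeft ω (comul z) * b) = φ z * φ (antipode K b) := fun z b => by
    rw [sliceLeft_mul, ← apply_sliceRight_eq_apply_sliceLeft]
    exact hψR.apply_antipode_sliceRight_comul_mul hφL z b
  obtain ⟨a₁, ha₁⟩ := LinearMap.surjective_iff_ne_zero.mpr hφ0 1
  have hslice : ∀ z, sliceLeft ω (comul z) = φ z • sliceLeft ω (comul a₁) := fun z =>
    sub_eq_zero.mp (hfaith _ fun b => by simp [sub_mul, hpair, ha₁])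
  refine ⟨counit (sliceLeft ω (comul a₁)), fun z => ?_⟩
  have h := counit_sliceLeft_comul ω z
  rw [hslice, map_smul, smul_eq_mul] at h
  rw [mul_comm]
  exact h.symm

lemma mul_modular'_apply_eq_modular_apply_mul (hS : Function.Bijective (antipode K (A := A)))
    {φ : A →ₗ[K] K} (hfaith : ∀ a : A, (∀ b : A, φ (a * b) = 0) → a = 0) {d : A}
    (hd : ∀ b : A, φ (antipode K (b * d)) = φ b) {σ σ' : A → A}
    (hσ : ∀ a b : A, φ (a * b) = φ (b * σ a))
    (hσ' : ∀ a b : A, φ (antipode K (a * b)) = φ (antipode K (b * σ' a))) (z : A) :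
    d * σ' z = σ z * d := by
  refine sub_eq_zero.mp (eq_zero_of_forall_apply_antipode_mul_eq_zero hS hfaith fun b => ?_)
  rw [mul_sub, map_sub, map_sub, sub_eq_zero, ← mul_assoc, ← hσ', ← mul_assoc, hd,
    ← mul_assoc, hd, ← hσ]

lemma modular'_apply_eq_smul (hS : Function.Bijective (antipode K (A := A)))
    {φ : A →ₗ[K] K} (hfaith : ∀ a : A, (∀ b : A, φ (a * b) = 0) → a = 0) {d : A}
    (hdg : IsGroupLikeElem K d) (hd : ∀ b : A, φ (antipode K (b * d)) = φ b) {τ : K}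
    (hτ : ∀ z : A, φ (antipode K (antipode K z)) = τ * φ z) {σ' : A → A}
    (hσ' : ∀ a b : A, φ (antipode K (a * b)) = φ (antipode K (b * σ' a))) :
    σ' d = τ • d := by
  have hd' : ∀ x, φ (x * antipode K d) = φ (antipode K x) := fun x => by
    rw [← hd, mul_assoc, hdg.antipode_mul_cancel, mul_one]
  refine sub_eq_zero.mp (eq_zero_of_forall_apply_antipode_mul_eq_zero hS hfaith fun b => ?_)
  rw [mul_sub, map_sub, map_sub, sub_eq_zero, ← hσ', antipode_mul_antidistrib, hd', hτ,
    mul_smul_comm, map_smul, map_smul, hd, smul_eq_mul]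

lemma AlgEquiv.apply_apply_comm_of_mul_eq_mul {σ σ' : A ≃ₐ[K] A} {d : A} (hd : IsUnit d)
    (hint : ∀ z : A, d * σ' z = σ z * d) {c : K} (hc : σ' d = c • d) (z : A) :
    σ (σ' z) = σ' (σ z) := by
  have hσd : σ d = c • d := by
    refine hd.mul_left_injective (?_ : σ d * d = c • d * d)
    rw [← hint, hc, smul_mul_assoc, mul_smul_comm]
  refine (hd.map σ).mul_right_injective ?_
  calc σ d * σ (σ' z) = σ (σ z) * σ d := by rw [← map_mul, hint, map_mul]
    _ = σ d * σ' (σ z) := by rw [hσd, smul_mul_assoc, mul_smul_comm, hint]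

lemma modular_apply_comm_of_apply_eq_mul {φ : A →ₗ[K] K}
    (hfaith : ∀ a : A, (∀ b : A, φ (b * a) = 0) → a = 0) {σ : A → A}
    (hσ : ∀ a b : A, φ (a * b) = φ (b * σ a)) {T : A → A} (hT : Function.Surjective T)
    (hTmul : ∀ a b : A, T (a * b) = T a * T b) {τ : K} (hτ : ∀ z : A, φ (T z) = τ * φ z)
    (z : A) : σ (T z) = T (σ z) := by
  refine sub_eq_zero.mp (hfaith _ fun c => ?_)
  obtain ⟨b, rfl⟩ := hT c
  rw [mul_sub, map_sub, sub_eq_zero, ← hσ, ← hTmul, ← hTmul, hτ, hτ, hσ]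

lemma antipode_eq_modular_antipode_modular' (hS : Function.Surjective (antipode K (A := A)))
    {φ : A →ₗ[K] K} (hfaith : ∀ a : A, (∀ b : A, φ (b * a) = 0) → a = 0) {σ σ' : A → A}
    (hσ : ∀ a b : A, φ (a * b) = φ (b * σ a))
    (hσ' : ∀ a b : A, φ (antipode K (a * b)) = φ (antipode K (b * σ' a))) (z : A) :
    antipode K z = σ (antipode K (σ' z)) := by
  refine sub_eq_zero.mp (hfaith _ fun c => ?_)
  obtain ⟨b, rfl⟩ := hS c
  rw [mul_sub, map_sub, sub_eq_zero, ← antipode_mul_antidistrib, hσ', antipode_mul_antidistrib,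
    hσ]

end Modular

theorem modular_automorphisms_commute
    {A : Type*} [Ring A] [HopfAlgebra ℂ A]
    (hS : Function.Bijective (antipode (R := ℂ) (A := A)))
    (φ : A →ₗ[ℂ] ℂ) (hφ0 : φ ≠ 0)
    (hφL : ∀ a : A,
      (TensorProduct.rid ℂ A) (LinearMap.lTensor A φ (Coalgebra.comul a)) = φ a • (1 : A))
    (hφf1 : ∀ a : A, (∀ b : A, φ (a * b) = 0) → a = 0)
    (hφf2 : ∀ a : A, (∀ b : A, φ (b * a) = 0) → a = 0)
    (σ : A ≃ₐ[ℂ] A) (hσ : ∀ a b : A, φ (a * b) = φ (b * σ a))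
    (hψR : ∀ a : A,
      (TensorProduct.lid ℂ A) (LinearMap.rTensor A (φ ∘ₗ antipode (R := ℂ))
        (Coalgebra.comul a)) = φ (antipode (R := ℂ) a) • (1 : A))
    (σ' : A ≃ₐ[ℂ] A)
    (hσ' : ∀ a b : A, φ (antipode (R := ℂ) (a * b)) = φ (antipode (R := ℂ) (b * σ' a))) :
    (∀ a : A, σ (σ' a) = σ' (σ a)) ∧
      (∀ a : A, σ (antipode (R := ℂ) (antipode (R := ℂ) a)) =
        antipode (R := ℂ) (antipode (R := ℂ) (σ a))) ∧
      (∀ a : A, σ' (antipode (R := ℂ) (antipode (R := ℂ) a)) =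
        antipode (R := ℂ) (antipode (R := ℂ) (σ' a))) := by
  obtain ⟨d, hdg, hd⟩ := exists_isGroupLikeElem_forall_apply_antipode_mul_eq hS hφ0 hφL hφf1 hψR
  obtain ⟨τ, hτ⟩ := exists_forall_apply_antipode_antipode_eq_mul hφ0 hφL hφf1 hψR
  have hσS2 : ∀ z, σ (antipode ℂ (antipode ℂ z)) = antipode ℂ (antipode ℂ (σ z)) :=
    modular_apply_comm_of_apply_eq_mul hφf2 hσ (hS.2.comp hS.2)
      (fun a b => by simp only [antipode_mul_antidistrib]) hτ
  have hS_conj := antipode_eq_modular_antipode_modular' hS.2 hφf2 hσ hσ'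
  have hint := mul_modular'_apply_eq_modular_apply_mul hS hφf1 hd hσ hσ'
  have hσ'd := modular'_apply_eq_smul hS hφf1 hdg hd hτ hσ'
  refine ⟨AlgEquiv.apply_apply_comm_of_mul_eq_mul hdg.isUnit hint hσ'd, hσS2, fun z => ?_⟩
  exact hS.1 (σ.injective (by rw [← hS_conj, hσS2, ← hS_conj]))
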